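/- Bellman fixed point transfer (exact φMDPπ, abstract form): Let H be a set, S a finite set, φ : H → S surjective, γ ∈ [0,1). Suppose Q : H → ℝ and q : S → ℝ are bounded and satisfy Q(h) = r(h) + γ·∑_{h'} T(h'|h)·Q(h') and q(s) = ρ(s) + γ·∑_{s'} t(s'|s)·q(s'), where for all h: r(h) = ρ(φ(h)) and the pushforward of T(·|h) under φ equals t(·|φ(h)) (i.e., ∑_{h' : φ(h')=s'} T(h'|h) = t(s'|φ(h)) for all s'). Then Q(h) = q(φ(h)) for all h ∈ H. -/

import Mathlib

/-!
The lift `q ∘ φ` of the aggregated value function is bounded and, because the reward factors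
through `φ` and `T(·|h)` pushes forward to `t(·|φ h)`, it solves the same Bellman equation as `Q`.
The Bellman operator is a `γ`-contraction on bounded functions, so its bounded fixed point is
unique and `Q = q ∘ φ`.
-/

lemma summable_of_tsum_eq_one {ι : Type*} {w : ι → ℝ} (hw : ∑' i, w i = 1) : Summable w := by
  by_contra hns
  simp [tsum_eq_zero_of_not_summable hns] at hw

lemma Summable.mul_of_abs_le {ι : Type*} {w f : ι → ℝ} (hw : Summable w) {C : ℝ}
    (hf : ∀ i, |f i| ≤ C) : Summable fun i => w i * f i :=
  hw.abs.mul_right C |>.of_norm_bounded fun i => by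
    rw [Real.norm_eq_abs, abs_mul]
    exact mul_le_mul_of_nonneg_left (hf i) (abs_nonneg _)

lemma abs_tsum_mul_le_of_abs_le {ι : Type*} {w f : ι → ℝ} (hw0 : ∀ i, 0 ≤ w i)
    (hw1 : ∑' i, w i = 1) {C : ℝ} (hf : ∀ i, |f i| ≤ C) : |∑' i, w i * f i| ≤ C := by
  have hw := summable_of_tsum_eq_one hw1
  have hwf := hw.mul_of_abs_le hf
  calc |∑' i, w i * f i|
      ≤ ∑' i, |w i * f i| := by
        simpa only [Real.norm_eq_abs] using norm_tsum_le_tsum_norm hwf.norm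
    _ ≤ ∑' i, w i * C := by
      refine hwf.abs.tsum_le_tsum (fun i => ?_) (hw.mul_right C)
      rw [abs_mul, abs_of_nonneg (hw0 i)]
      exact mul_le_mul_of_nonneg_left (hf i) (hw0 i)
    _ = C := by rw [tsum_mul_right, hw1, one_mul]

lemma tsum_mul_comp_eq_sum_fiber {H S : Type*} [Fintype S] (φ : H → S) {w : H → ℝ}
    (hw : Summable w) (g : S → ℝ) :
    ∑' x, w x * g (φ x) = ∑ s, (∑' x : {x // φ x = s}, w x) * g s := by
  have hsplit : ∀ x, w x * g (φ x) = ∑ s, {x | φ x = s}.indicator w x * g s := by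
    intro x
    rw [Finset.sum_eq_single (φ x) (fun s _ hs => by simp [Ne.symm hs]) (by simp)]
    simp
  simp_rw [hsplit]
  rw [Summable.tsum_finsetSum fun s _ => (hw.indicator _).mul_right (g s)]
  refine Finset.sum_congr rfl fun s _ => ?_
  rw [tsum_mul_right]
  exact congrArg (· * g s) (tsum_subtype {x | φ x = s} w).symm

lemma eq_zero_of_bound_contracts {α : Type*} {γ : ℝ} (hγ0 : 0 ≤ γ) (hγ1 : γ < 1) {D : α → ℝ}
    (hbd : ∃ C, ∀ a, |D a| ≤ C) (hcontr : ∀ C, (∀ a, |D a| ≤ C) → ∀ a, |D a| ≤ γ * C) :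
    D = 0 := by
  obtain ⟨C, hC⟩ := hbd
  have hpow : ∀ n : ℕ, ∀ a, |D a| ≤ γ ^ n * C := by
    intro n
    induction n with
    | zero => simpa using hC
    | succ n ih => simpa [pow_succ', mul_assoc] using hcontr _ ih
  have hlim : Filter.Tendsto (fun n : ℕ => γ ^ n * C) Filter.atTop (nhds 0) := by
    simpa using (tendsto_pow_atTop_nhds_zero_of_lt_one hγ0 hγ1).mul_const C
  funext a
  exact abs_nonpos_iff.mp (ge_of_tendsto' hlim fun n => hpow n a)

lemma bellman_solution_unique {H : Type*} {γ : ℝ} (hγ0 : 0 ≤ γ) (hγ1 : γ < 1)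
    {T : H → H → ℝ} (hT0 : ∀ h h', 0 ≤ T h h') (hT1 : ∀ h, ∑' h', T h h' = 1) {r Q₁ Q₂ : H → ℝ}
    (hQ₁bd : ∃ C, ∀ h, |Q₁ h| ≤ C) (hQ₂bd : ∃ C, ∀ h, |Q₂ h| ≤ C)
    (hQ₁ : ∀ h, Q₁ h = r h + γ * ∑' h', T h h' * Q₁ h')
    (hQ₂ : ∀ h, Q₂ h = r h + γ * ∑' h', T h h' * Q₂ h') : Q₁ = Q₂ := by
  obtain ⟨C₁, hC₁⟩ := hQ₁bd
  obtain ⟨C₂, hC₂⟩ := hQ₂bd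
  have hdiff : ∀ h, Q₁ h - Q₂ h = γ * ∑' h', T h h' * (Q₁ h' - Q₂ h') := by
    intro h
    have hT := summable_of_tsum_eq_one (hT1 h)
    simp_rw [mul_sub]
    rw [(hT.mul_of_abs_le hC₁).tsum_sub (hT.mul_of_abs_le hC₂), hQ₁ h, hQ₂ h]
    ring
  refine sub_eq_zero.mp (eq_zero_of_bound_contracts hγ0 hγ1 ?_ fun C hC h => ?_)
  · exact ⟨C₁ + C₂, fun h => (abs_sub _ _).trans (add_le_add (hC₁ h) (hC₂ h))⟩
  · rw [Pi.sub_apply, hdiff h, abs_mul, abs_of_nonneg hγ0]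
    exact mul_le_mul_of_nonneg_left (abs_tsum_mul_le_of_abs_le (hT0 h) (hT1 h) hC) hγ0

theorem exact_aggregation_transfer_general {H S : Type*} [Fintype S]
    (φ : H → S)
    (γ : ℝ) (hγ0 : 0 ≤ γ) (hγ1 : γ < 1)
    (T : H → H → ℝ) (hT0 : ∀ h h', 0 ≤ T h h') (hT1 : ∀ h, ∑' h', T h h' = 1)
    (t : S → S → ℝ)
    (r : H → ℝ) (ρ : S → ℝ)
    (Q : H → ℝ) (q : S → ℝ)
    (hQbd : ∃ C, ∀ h, |Q h| ≤ C)
    (hrρ : ∀ h, r h = ρ (φ h))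
    (hpush : ∀ h s', ∑' h' : {h' // φ h' = s'}, T h h'.1 = t (φ h) s')
    (hQ : ∀ h, Q h = r h + γ * ∑' h', T h h' * Q h')
    (hq : ∀ s, q s = ρ s + γ * ∑ s', t s s' * q s') :
    ∀ h, Q h = q (φ h) := by
  have hlift_bd : ∃ C, ∀ h, |q (φ h)| ≤ C :=
    ⟨∑ s, |q s|, fun h => Finset.single_le_sum (fun s _ => abs_nonneg (q s)) (Finset.mem_univ _)⟩
  have hlift : ∀ h, q (φ h) = r h + γ * ∑' h', T h h' * q (φ h') := by
    intro h
    rw [tsum_mul_comp_eq_sum_fiber φ (summable_of_tsum_eq_one (hT1 h)), hq, hrρ]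
    simp only [hpush]
  exact congrFun (bellman_solution_unique hγ0 hγ1 hT0 hT1 hQbd hlift_bd hQ hlift)

theorem exact_aggregation_transfer {H S : Type*} [Countable H] [Fintype S]
    (φ : H → S) (hφ : Function.Surjective φ)
    (γ : ℝ) (hγ0 : 0 ≤ γ) (hγ1 : γ < 1)
    (T : H → H → ℝ) (hT0 : ∀ h h', 0 ≤ T h h') (hT1 : ∀ h, ∑' h', T h h' = 1)
    (t : S → S → ℝ) (ht0 : ∀ s s', 0 ≤ t s s') (ht1 : ∀ s, ∑ s', t s s' = 1)
    (r : H → ℝ) (ρ : S → ℝ)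
    (Q : H → ℝ) (q : S → ℝ)
    (hQbd : ∃ C, ∀ h, |Q h| ≤ C) (hqbd : ∃ C, ∀ s, |q s| ≤ C)
    (hrρ : ∀ h, r h = ρ (φ h))
    (hpush : ∀ h s', ∑' h' : {h' // φ h' = s'}, T h h'.1 = t (φ h) s')
    (hQ : ∀ h, Q h = r h + γ * ∑' h', T h h' * Q h')
    (hq : ∀ s, q s = ρ s + γ * ∑ s', t s s' * q s') :
    ∀ h, Q h = q (φ h) :=
  exact_aggregation_transfer_general φ γ hγ0 hγ1 T hT0 hT1 t r ρ Q q hQbd hrρ hpush hQ hq
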